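/- arXiv:1707.04654 — 2 statements merged into one kernel-verified Lean document; each statement's English description precedes it below -/
import Mathlib

section
/- Let f = ∑_{n≥0} a(n)·Xⁿ be a formal power series with rational coefficients satisfying X·(1 + X)·f² − (1 + X)·f + 1 = 0. Then a(0) = 1, a(1) = 0, and for every integer n ≥ 2, (n+1)·a(n) = (n−1)·(2·a(n−1) + 3·a(n−2)). (f is the generating function (1 + x − √(1−2x−3x²))/(2x(1+x)) of the Riordan numbers, OEIS A005043.) -/
/-!
Completing the square, `g = 2X(1+X)f − (1+X)` satisfies `g² = (1+X)(1−3X)`. Differentiating and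
multiplying by `g` gives `2 g² g' = g (g²)'`, which is linear in `f` and `f'`; cancelling the factor
`4(1+X)` leaves the ODE `X(1+X)(1−3X) f' + (1−3X²) f = 1`, and its coefficient of `Xⁿ` is the
recurrence.
-/

open PowerSeries

variable {R : Type*}

theorem Derivation.two_mul_mul_eq_of_sq_eq {A : Type*} [CommRing R] [CommRing A] [Algebra R A]
    (D : Derivation R A A) {g p : A} (h : g ^ 2 = p) : 2 * p * D g = g * D p := by
  rw [← h, pow_two, D.leibniz, smul_eq_mul]
  ring

theorem PowerSeries.coeff_X_mul_derivative [CommSemiring R] (f : R⟦X⟧) (n : ℕ) :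
    coeff n (X * d⁄dX R f) = n * coeff n f := by
  cases n with
  | zero => simp
  | succ n => rw [coeff_succ_X_mul, coeff_derivative, mul_comm]; push_cast; rfl

theorem PowerSeries.coeff_ofNat_mul [Semiring R] (k : ℕ) [k.AtLeastTwo] (n : ℕ) (φ : R⟦X⟧) :
    coeff n (ofNat(k) * φ) = ofNat(k) * coeff n φ := by
  rw [← map_ofNat C, coeff_C_mul]

theorem riordan_ode [CommRing R] [IsDomain R] [CharZero R] {f : R⟦X⟧}
    (hf : X * (1 + X) * f ^ 2 - (1 + X) * f + 1 = 0) :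
    (1 - 2 * X - 3 * X ^ 2) * (X * d⁄dX R f) + (1 - 3 * X ^ 2) * f = 1 := by
  have hsq : (2 * X * (1 + X) * f - (1 + X)) ^ 2 = (1 + X) * (1 - 3 * X) := by
    rw [sub_eq_add_neg, mul_assoc (2 : R⟦X⟧) X, ← discrim_eq_sq_of_quadratic_eq_zero (c := 1)
      (by linear_combination hf), discrim]
    ring
  have hd := (d⁄dX R).two_mul_mul_eq_of_sq_eq hsq
  have h2 : d⁄dX R (2 : R⟦X⟧) = 0 := by simpa using (d⁄dX R).map_natCast 2
  have h3 : d⁄dX R (3 : R⟦X⟧) = 0 := by simpa using (d⁄dX R).map_natCast 3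
  simp only [map_sub, map_add, Derivation.leibniz, derivative_X, derivative_one, h2, h3,
    smul_eq_mul] at hd
  have h4 : (4 * (1 + X) : R⟦X⟧) ≠ 0 := by
    intro h
    simpa [map_ofNat] using congrArg constantCoeff h
  refine sub_eq_zero.mp ((mul_eq_zero.mp ?_).resolve_left h4)
  linear_combination hd

theorem coeff_of_riordan_ode [CommRing R] {f : R⟦X⟧}
    (h : (1 - 2 * X - 3 * X ^ 2) * (X * d⁄dX R f) + (1 - 3 * X ^ 2) * f = 1) :
    coeff 0 f = 1 ∧ 2 * coeff 1 f = 0 ∧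
      ∀ m : ℕ, ((m : R) + 3) * coeff (m + 2) f = (m + 1) * (2 * coeff (m + 1) f + 3 * coeff m f) := by
  have hE := coeff_X_mul_derivative f
  generalize X * d⁄dX R f = E at h hE
  have hshift : E + f = 1 + X * (2 * E) + X ^ 2 * (3 * E + 3 * f) := by linear_combination h
  refine ⟨?_, ?_, fun m => ?_⟩
  · have h0 := congrArg (coeff 0) hshift
    simp only [map_add, hE, coeff_zero_X_mul, coeff_X_pow_mul', coeff_one] at h0
    simpa using h0
  · have h1 := congrArg (coeff 1) hshift
    simp [hE, coeff_ofNat_mul, coeff_X_pow_mul'] at h1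
    linear_combination h1
  · have hm := congrArg (coeff (m + 2)) hshift
    simp only [map_add, coeff_succ_X_mul, coeff_X_pow_mul, coeff_ofNat_mul, hE, coeff_one] at hm
    push_cast at hm
    linear_combination hm

/-- The coefficient sequence of the power series solution of
X·(1+X)·f² − (1+X)·f + 1 = 0 (the Riordan numbers, OEIS A005043) satisfies
a(0) = 1, a(1) = 0, and (n+1)·a(n) = (n−1)·(2·a(n−1) + 3·a(n−2)) for n ≥ 2. -/
theorem riordan_recurrence (f : PowerSeries ℚ)
    (hf : PowerSeries.X * (1 + PowerSeries.X) * f ^ 2 -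
        (1 + PowerSeries.X) * f + 1 = 0) :
    PowerSeries.coeff 0 f = 1 ∧ PowerSeries.coeff 1 f = 0 ∧
      ∀ n : ℕ, 2 ≤ n →
        ((n : ℚ) + 1) * PowerSeries.coeff n f =
          ((n : ℚ) - 1) *
            (2 * PowerSeries.coeff (n - 1) f +
              3 * PowerSeries.coeff (n - 2) f) := by
  obtain ⟨h0, h1, hrec⟩ := coeff_of_riordan_ode (riordan_ode hf)
  refine ⟨h0, by simpa using h1, fun n hn => ?_⟩
  obtain ⟨m, rfl⟩ := Nat.exists_eq_add_of_le' hn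
  rw [Nat.add_sub_cancel, show m + 2 - 1 = m + 1 by omega]
  push_cast
  linear_combination hrec m
end

section
/- Let f = ∑_{n≥0} a(n)·Xⁿ be a formal power series with rational coefficients satisfying (1 − 6X + X²)·f² = 1 and a(0) = 1. Then a(1) = 3 and for every integer n ≥ 2, n·a(n) = 3·(2n−1)·a(n−1) − (n−1)·a(n−2). (f is the generating function 1/√(1−6x+x²) of the central Delannoy numbers, OEIS A001850.) -/
/-!
Differentiating `P * f ^ 2 = 1` with `P = 1 - 6X + X²` gives `f * (P' * f + 2 * P * f') = 0`, and
`f` is a unit, so `f` satisfies the first-order linear equation `P * f' = (3 - X) * f`.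
Comparing coefficients of `Xⁿ` on both sides is the three-term recurrence.
-/

open PowerSeries

theorem Derivation.map_mul_add_two_mul_map_eq_zero_of_mul_sq_eq_one {R A : Type*}
    [CommSemiring R] [CommRing A] [Algebra R A] (D : Derivation R A A) {a b : A}
    (h : a * b ^ 2 = 1) : D a * b + 2 * a * D b = 0 := by
  have hb : IsUnit b := .of_mul_eq_one_right (a * b) (by rw [← h]; ring)
  have hD : b * (D a * b + 2 * a * D b) = D (a * b ^ 2) := by
    simp only [Derivation.leibniz, Derivation.leibniz_pow, smul_eq_mul, nsmul_eq_mul]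
    push_cast
    ring
  rw [← hb.mul_right_eq_zero, hD, h, Derivation.map_one_eq_zero]

namespace PowerSeries

variable {R : Type*} [CommRing R]

@[simp]
theorem coeff_ofNat_mul_s9 (m : ℕ) [m.AtLeastTwo] (f : R⟦X⟧) (n : ℕ) :
    coeff n ((ofNat(m) : R⟦X⟧) * f) = ofNat(m) * coeff n f := by
  rw [← map_ofNat C m, coeff_C_mul]

theorem coeff_X_mul_derivative_s9 (f : R⟦X⟧) (n : ℕ) :
    coeff n (X * d⁄dX R f) = n * coeff n f := by
  cases n with
  | zero => simp
  | succ n => rw [coeff_succ_X_mul, coeff_derivative, mul_comm]; push_cast; ring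

theorem derivative_one_sub_six_X_add_X_sq :
    d⁄dX R (1 - 6 * X + X ^ 2) = 2 * X - 6 := by
  have h6 : d⁄dX R (6 : R⟦X⟧) = 0 := by
    simpa using (d⁄dX R).map_natCast 6
  simp only [map_add, map_sub, Derivation.leibniz, Derivation.leibniz_pow, h6,
    Derivation.map_one_eq_zero, derivative_X, smul_eq_mul, nsmul_eq_mul]
  push_cast
  ring

theorem one_sub_six_X_add_X_sq_mul_derivative {f : R⟦X⟧} [IsDomain R] [CharZero R]
    (hf : (1 - 6 * X + X ^ 2) * f ^ 2 = 1) :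
    (1 - 6 * X + X ^ 2) * d⁄dX R f = (3 - X) * f := by
  have h := (d⁄dX R).map_mul_add_two_mul_map_eq_zero_of_mul_sq_eq_one hf
  rw [derivative_one_sub_six_X_add_X_sq] at h
  have h2 : (2 : R⟦X⟧) ≠ 0 := fun h2 => by
    simpa [map_ofNat] using congrArg (constantCoeff (R := R)) h2
  rw [← sub_eq_zero, ← mul_right_inj' h2, mul_zero, ← h]
  ring

theorem coeff_add_two_of_one_sub_six_X_add_X_sq_mul_derivative {f : R⟦X⟧}
    (hf : (1 - 6 * X + X ^ 2) * d⁄dX R f = (3 - X) * f) (n : ℕ) :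
    (n + 2) * coeff (n + 2) f = 3 * (2 * n + 3) * coeff (n + 1) f - (n + 1) * coeff n f := by
  have h := congrArg (coeff (n + 1)) hf
  simp only [sub_mul, add_mul, one_mul, pow_two, mul_assoc, map_add, map_sub, coeff_ofNat_mul_s9,
    coeff_succ_X_mul, coeff_X_mul_derivative_s9, coeff_derivative] at h
  push_cast at h
  linear_combination h

theorem coeff_one_of_one_sub_six_X_add_X_sq_mul_derivative {f : R⟦X⟧}
    (hf : (1 - 6 * X + X ^ 2) * d⁄dX R f = (3 - X) * f) :
    coeff 1 f = 3 * coeff 0 f := by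
  have h := congrArg (coeff 0) hf
  simp only [sub_mul, add_mul, one_mul, pow_two, mul_assoc, map_add, map_sub, coeff_ofNat_mul_s9,
    coeff_zero_X_mul, coeff_derivative] at h
  linear_combination h

end PowerSeries

/-- The coefficient sequence of the power series f with (1 − 6X + X²)·f² = 1
and a(0) = 1 (the central Delannoy numbers, OEIS A001850) satisfies
a(1) = 3 and n·a(n) = 3·(2n−1)·a(n−1) − (n−1)·a(n−2) for all n ≥ 2. -/
theorem central_delannoy_recurrence (f : PowerSeries ℚ)
    (hf : (1 - 6 * PowerSeries.X + PowerSeries.X ^ 2) * f ^ 2 = 1)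
    (h0 : PowerSeries.coeff 0 f = 1) :
    PowerSeries.coeff 1 f = 3 ∧
      ∀ n : ℕ, 2 ≤ n →
        (n : ℚ) * PowerSeries.coeff n f =
          3 * (2 * (n : ℚ) - 1) * PowerSeries.coeff (n - 1) f -
            ((n : ℚ) - 1) * PowerSeries.coeff (n - 2) f := by
  have hode := one_sub_six_X_add_X_sq_mul_derivative hf
  refine ⟨by rw [coeff_one_of_one_sub_six_X_add_X_sq_mul_derivative hode, h0]; norm_num, ?_⟩
  intro n hn
  obtain ⟨k, rfl⟩ : ∃ k, n = k + 2 := ⟨n - 2, by omega⟩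
  rw [Nat.add_sub_cancel, show k + 2 - 1 = k + 1 by omega]
  push_cast
  linear_combination coeff_add_two_of_one_sub_six_X_add_X_sq_mul_derivative hode k
end
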